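/- Let J be an invertible Hermitian N×N complex matrix and A₁, A₂ two diagonalizable J-selfadjoint N×N matrices with all eigenvalues real, such that D = {x : A₁x = A₂x} has codimension n. For an open real interval Δ, let Lⱼ denote the sum of the eigenspaces of Aⱼ for eigenvalues in Δ, and let sig(Lⱼ) = κ₊(Lⱼ) - κ₋(Lⱼ) be the difference of the numbers of positive and negative squares of the form [x,y] = (Jx,y) restricted to Lⱼ. Then |sig(L₂) - sig(L₁)| ≤ n. -/

import Mathlib

open Matrix

/-- `A` is diagonalizable. -/
def Diagonalizable {N : ℕ} (A : Matrix (Fin N) (Fin N) ℂ) : Prop :=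
  ∃ P D : Matrix (Fin N) (Fin N) ℂ, IsUnit P.det ∧ D.IsDiag ∧ A = P * D * P⁻¹

/-- The indefinite inner product `[x,y] = (Jx, y)` on `ℂᴺ`. -/
noncomputable def Jform {N : ℕ} (J : Matrix (Fin N) (Fin N) ℂ) (x y : Fin N → ℂ) : ℂ :=
  star (J *ᵥ x) ⬝ᵥ y

/-- Number of positive squares of `[·,·]` on the subspace `L`:
the maximal dimension of a subspace of `L` on which the form is positive definite. -/
noncomputable def posSquares {N : ℕ} (J : Matrix (Fin N) (Fin N) ℂ)
    (L : Submodule ℂ (Fin N → ℂ)) : ℕ :=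
  sSup {d : ℕ | ∃ W : Submodule ℂ (Fin N → ℂ), W ≤ L ∧ Module.finrank ℂ W = d ∧
    ∀ x ∈ W, x ≠ 0 → 0 < (Jform J x x).re}

/-- Number of negative squares of `[·,·]` on the subspace `L`. -/
noncomputable def negSquares {N : ℕ} (J : Matrix (Fin N) (Fin N) ℂ)
    (L : Submodule ℂ (Fin N → ℂ)) : ℕ :=
  sSup {d : ℕ | ∃ W : Submodule ℂ (Fin N → ℂ), W ≤ L ∧ Module.finrank ℂ W = d ∧
    ∀ x ∈ W, x ≠ 0 → (Jform J x x).re < 0}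

/-- The signature `sig(L) = κ₊(L) - κ₋(L)`. -/
noncomputable def sig {N : ℕ} (J : Matrix (Fin N) (Fin N) ℂ)
    (L : Submodule ℂ (Fin N → ℂ)) : ℤ :=
  (posSquares J L : ℤ) - negSquares J L

/-- Sum of the eigenspaces of `A` for (real) eigenvalues in `Δ`. -/
noncomputable def eigSpan {N : ℕ} (A : Matrix (Fin N) (Fin N) ℂ) (Δ : Set ℝ) :
    Submodule ℂ (Fin N → ℂ) :=
  ⨆ μ ∈ Δ, Module.End.eigenspace (Matrix.toLin' A) (μ : ℂ)


/-!
For `l` off the spectrum of `A`, the Hermitian matrix `l J - J A` acts on the eigenspace `E_μ`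
as `(l - μ) J`. The eigenspaces are `J`-orthogonal, `J`-nondegenerate and span `ℂᴺ`, so
`κ₊(l J - J A) = ∑_{μ < l} κ₊(E_μ) + ∑_{μ > l} κ₋(E_μ)`. Taking `a ≤ b` off both spectra such
that `Δ` and `(a, b)` contain the same eigenvalues, `sig(L_Δ) = κ₊(b J - J A) - κ₊(a J - J A)`.
The pencils of `A₁` and `A₂` differ by `R = J (A₁ - A₂)`; as `κ₊` is subadditive, each endpoint
term moves by at most `κ₊(R)` or `κ₋(R)`, and `κ₊(R) + κ₋(R) ≤ rank R = n`.

All counting of squares rests on one construction: the orthogonal complement in `L` of a maximal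
positive subspace is nonpositive and has codimension at most `κ₊(L)`.
-/

section Form

variable {N : ℕ} {H K : Matrix (Fin N) (Fin N) ℂ} {x y z : Fin N → ℂ}

@[simp] lemma Jform_add_left : Jform H (x + y) z = Jform H x z + Jform H y z := by
  simp [Jform, mulVec_add, add_dotProduct]

@[simp] lemma Jform_add_right : Jform H x (y + z) = Jform H x y + Jform H x z := by
  simp [Jform, dotProduct_add]

@[simp] lemma Jform_smul_left (c : ℂ) : Jform H (c • x) y = star c * Jform H x y := by
  simp [Jform, mulVec_smul, smul_dotProduct]

@[simp] lemma Jform_smul_right (c : ℂ) : Jform H x (c • y) = c * Jform H x y := by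
  simp [Jform, dotProduct_smul]

@[simp] lemma Jform_zero_left : Jform H 0 y = 0 := by simp [Jform]

@[simp] lemma Jform_zero_right : Jform H x 0 = 0 := by simp [Jform]

lemma Jform_neg : Jform (-H) x y = -Jform H x y := by
  simp [Jform, neg_mulVec, neg_dotProduct]

lemma Jform_add : Jform (H + K) x y = Jform H x y + Jform K x y := by
  simp [Jform, add_mulVec, add_dotProduct]

lemma Jform_sub : Jform (H - K) x y = Jform H x y - Jform K x y := by
  simp [Jform, sub_mulVec, sub_dotProduct]

lemma Jform_smul (c : ℂ) : Jform (c • H) x y = star c * Jform H x y := by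
  simp [Jform, smul_mulVec, smul_dotProduct]

lemma Jform_mul : Jform (H * K) x y = Jform H (K *ᵥ x) y := by
  simp [Jform, mulVec_mulVec]

lemma Jform_eq_star_dotProduct (hH : H.IsHermitian) : Jform H x y = star x ⬝ᵥ (H *ᵥ y) := by
  rw [Jform, star_mulVec, dotProduct_mulVec, hH.eq]

lemma Jform_conj_symm (hH : H.IsHermitian) : star (Jform H x y) = Jform H y x := by
  rw [Jform_eq_star_dotProduct hH, Jform, star_dotProduct, star_star, dotProduct_comm]

end Form

namespace Jform

open Module

variable {N : ℕ} {H : Matrix (Fin N) (Fin N) ℂ} {U V W : Submodule ℂ (Fin N → ℂ)}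
  {x y : Fin N → ℂ}

def PosOn (H : Matrix (Fin N) (Fin N) ℂ) (W : Submodule ℂ (Fin N → ℂ)) : Prop :=
  ∀ x ∈ W, x ≠ 0 → 0 < (Jform H x x).re

def NonposOn (H : Matrix (Fin N) (Fin N) ℂ) (W : Submodule ℂ (Fin N → ℂ)) : Prop :=
  ∀ x ∈ W, (Jform H x x).re ≤ 0

/-- The form is nondegenerate on `L` exactly when `Disjoint L (orth H L)`. -/
def orth (H : Matrix (Fin N) (Fin N) ℂ) (W : Submodule ℂ (Fin N → ℂ)) :
    Submodule ℂ (Fin N → ℂ) where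
  carrier := {y | ∀ x ∈ W, Jform H x y = 0}
  add_mem' hy hz x hx := by simp [hy x hx, hz x hx]
  zero_mem' := by simp
  smul_mem' c y hy x hx := by simp [hy x hx]

lemma mem_orth : y ∈ orth H W ↔ ∀ x ∈ W, Jform H x y = 0 := Iff.rfl

lemma orth_anti (h : U ≤ V) : orth H V ≤ orth H U := fun _ hy x hx => hy x (h hx)

lemma orth_neg : orth (-H) W = orth H W := by
  ext y
  simp [mem_orth, Jform_neg]

lemma orth_sup : orth H (U ⊔ V) = orth H U ⊓ orth H V := by
  refine le_antisymm (le_inf (orth_anti le_sup_left) (orth_anti le_sup_right)) ?_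
  rintro y ⟨hU, hV⟩ x hx
  obtain ⟨u, hu, v, hv, rfl⟩ := Submodule.mem_sup.mp hx
  simp [hU u hu, hV v hv]

lemma le_orth_comm (hH : H.IsHermitian) : V ≤ orth H U ↔ U ≤ orth H V := by
  refine ⟨fun h u hu v hv => ?_, fun h v hv u hu => ?_⟩ <;>
    rw [← Jform_conj_symm hH, star_eq_zero]
  exacts [h hv u hu, h hu v hv]

lemma PosOn.nonneg (hW : PosOn H W) (hx : x ∈ W) : 0 ≤ (Jform H x x).re := by
  by_cases hx0 : x = 0
  · simp [hx0]
  · exact (hW x hx hx0).le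

lemma PosOn.disjoint (hW : PosOn H W) (hV : NonposOn H V) : Disjoint W V :=
  Submodule.disjoint_def.mpr fun x hxW hxV => by
    by_contra hx0
    exact (hV x hxV).not_gt (hW x hxW hx0)

lemma PosOn.disjoint_orth (hW : PosOn H W) : Disjoint W (orth H W) :=
  Submodule.disjoint_def.mpr fun x hxW hxo => by
    by_contra hx0
    exact (hW x hxW hx0).ne' (by simp [hxo x hxW])

lemma PosOn.sup (hH : H.IsHermitian) (hU : PosOn H U) (hV : PosOn H V)
    (hUV : V ≤ orth H U) : PosOn H (U ⊔ V) := by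
  intro x hx hx0
  obtain ⟨u, hu, v, hv, rfl⟩ := Submodule.mem_sup.mp hx
  have huv : Jform H u v = 0 := hUV hv u hu
  have hvu : Jform H v u = 0 := by rw [← Jform_conj_symm hH, huv, star_zero]
  have hre : (Jform H (u + v) (u + v)).re = (Jform H u u).re + (Jform H v v).re := by
    simp [huv, hvu]
  rw [hre]
  by_cases hu0 : u = 0
  · subst hu0
    exact add_pos_of_nonneg_of_pos (hU.nonneg hu) (hV v hv (by simpa using hx0))
  · exact add_pos_of_pos_of_nonneg (hU u hu hu0) (hV.nonneg hv)

lemma posOn_span_singleton (hx : 0 < (Jform H x x).re) : PosOn H (ℂ ∙ x) := by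
  rintro _ hy hy0
  obtain ⟨c, rfl⟩ := Submodule.mem_span_singleton.mp hy
  have hc : c ≠ 0 := by rintro rfl; simp at hy0
  rw [Jform_smul_left, Jform_smul_right, ← mul_assoc, Complex.star_def, Complex.conj_mul',
    ← Complex.ofReal_pow, Complex.re_ofReal_mul]
  positivity

lemma NonposOn.inf_add {K : Matrix (Fin N) (Fin N) ℂ} (hU : NonposOn H U) (hV : NonposOn K V) :
    NonposOn (H + K) (U ⊓ V) := fun x hx => by
  rw [Jform_add, Complex.add_re]
  exact add_nonpos (hU x hx.1) (hV x hx.2)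

lemma NonposOn.re_Jform_eq_zero (hH : H.IsHermitian) (hV : NonposOn H V) (hx : x ∈ V)
    (hxx : (Jform H x x).re = 0) (hy : y ∈ V) : (Jform H x y).re = 0 := by
  set a := (Jform H x y).re
  set b := (Jform H y y).re
  have hb : b ≤ 0 := hV y hy
  have hline : ∀ t : ℝ, 2 * t * a + t ^ 2 * b ≤ 0 := fun t => by
    have h := hV (x + (t : ℂ) • y) (V.add_mem hx (V.smul_mem _ hy))
    simp only [Jform_add_left, Jform_add_right, Jform_smul_left, Jform_smul_right,
      ← Jform_conj_symm hH (x := x) (y := y)] at h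
    simp [Complex.mul_re, hxx] at h
    linarith
  -- at `t = a / (1 - b)` the left-hand side equals `t ^ 2 * (2 - b)`
  set t := a / (1 - b)
  have ht : t * (1 - b) = a := div_mul_cancel₀ a (by linarith)
  have := hline t
  nlinarith [sq_nonneg t]

lemma NonposOn.mem_orth (hH : H.IsHermitian) (hV : NonposOn H V) (hx : x ∈ V)
    (hxx : (Jform H x x).re = 0) : x ∈ orth H V := by
  intro y hy
  have hre := hV.re_Jform_eq_zero hH hx hxx hy
  have him : (Jform H x y).im = 0 := by
    simpa [Complex.mul_re] using hV.re_Jform_eq_zero hH hx hxx (V.smul_mem Complex.I hy)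
  rw [← Jform_conj_symm hH, star_eq_zero]
  exact Complex.ext hre him

lemma le_finrank_orth_add_finrank (H : Matrix (Fin N) (Fin N) ℂ) (W : Submodule ℂ (Fin N → ℂ)) :
    N ≤ finrank ℂ (orth H W) + finrank ℂ W := by
  set b := finBasis ℂ W
  -- `M *ᵥ y` lists the values `[b i, y]`
  set M : Matrix (Fin (finrank ℂ W)) (Fin N) ℂ := .of fun i => star (H *ᵥ b i)
  have hker : LinearMap.ker M.mulVecLin ≤ orth H W := by
    intro y hy x hx
    have hb : ∀ i, Jform H (b i) y = 0 := fun i => congr_fun hy i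
    have hsum := map_sum (AddMonoidHom.mk' (Jform H · y) fun _ _ => Jform_add_left)
      (fun i => b.repr ⟨x, hx⟩ i • (b i : Fin N → ℂ)) Finset.univ
    simp only [AddMonoidHom.mk'_apply] at hsum
    rw [← Submodule.coe_mk x hx, ← b.sum_repr ⟨x, hx⟩]
    simp only [Submodule.coe_sum, Submodule.coe_smul]
    simp [hsum, hb]
  have hrange : finrank ℂ (LinearMap.range M.mulVecLin) ≤ finrank ℂ W := by
    simpa using Submodule.finrank_le (LinearMap.range M.mulVecLin)
  have := M.mulVecLin.finrank_range_add_finrank_ker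
  have := Submodule.finrank_mono hker
  simp only [finrank_fin_fun] at *
  omega

lemma finrank_le_finrank_inf_orth_add (H : Matrix (Fin N) (Fin N) ℂ)
    (W L : Submodule ℂ (Fin N → ℂ)) : finrank ℂ L ≤ finrank ℂ ↥(L ⊓ orth H W) + finrank ℂ W := by
  have h₁ := le_finrank_orth_add_finrank H W
  have h₂ := Submodule.finrank_sup_add_finrank_inf_eq L (orth H W)
  have h₃ : finrank ℂ ↥(L ⊔ orth H W) ≤ N := by simpa using Submodule.finrank_le (L ⊔ orth H W)
  omega

end Jform

section Squares

open Jform Module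

variable {N : ℕ} {H K : Matrix (Fin N) (Fin N) ℂ} {L V W : Submodule ℂ (Fin N → ℂ)}

lemma bddAbove_posSquares_set (H : Matrix (Fin N) (Fin N) ℂ) (L : Submodule ℂ (Fin N → ℂ)) :
    BddAbove {d | ∃ W : Submodule ℂ (Fin N → ℂ), W ≤ L ∧ finrank ℂ W = d ∧ PosOn H W} :=
  ⟨N, by rintro _ ⟨W, -, rfl, -⟩; simpa using W.finrank_le⟩

lemma exists_posOn_finrank_eq_posSquares (H : Matrix (Fin N) (Fin N) ℂ)
    (L : Submodule ℂ (Fin N → ℂ)) :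
    ∃ W ≤ L, PosOn H W ∧ finrank ℂ W = posSquares H L := by
  obtain ⟨W, hWL, hW, hWpos⟩ := Nat.sSup_mem
    (s := {d | ∃ W : Submodule ℂ (Fin N → ℂ), W ≤ L ∧ finrank ℂ W = d ∧ PosOn H W})
    ⟨0, ⊥, bot_le, finrank_bot ℂ _, fun x hx hx0 => absurd hx hx0⟩
    (bddAbove_posSquares_set H L)
  exact ⟨W, hWL, hWpos, hW⟩

lemma finrank_le_posSquares (hWL : W ≤ L) (hW : PosOn H W) : finrank ℂ W ≤ posSquares H L :=
  le_csSup (bddAbove_posSquares_set H L) ⟨W, hWL, rfl, hW⟩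

lemma posSquares_congr (h : ∀ x ∈ L, 0 < (Jform H x x).re ↔ 0 < (Jform K x x).re) :
    posSquares H L = posSquares K L := by
  unfold posSquares
  congr 1
  ext d
  refine exists_congr fun W => and_congr_right fun hWL => and_congr_right fun _ => ?_
  exact forall₂_congr fun x hx => imp_congr_right fun _ => h x (hWL hx)

lemma negSquares_eq_posSquares_neg : negSquares H L = posSquares (-H) L := by
  unfold negSquares posSquares
  simp only [Jform_neg, Complex.neg_re, neg_pos]

lemma finrank_add_finrank_le_of_posOn_of_nonposOn (hWL : W ≤ L) (hVL : V ≤ L)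
    (hW : PosOn H W) (hV : NonposOn H V) : finrank ℂ W + finrank ℂ V ≤ finrank ℂ L := by
  rw [← Submodule.finrank_sup_add_finrank_inf_eq, (hW.disjoint hV).eq_bot, finrank_bot, add_zero]
  exact Submodule.finrank_mono (sup_le hWL hVL)

lemma posSquares_add_negSquares_le : posSquares H L + negSquares H L ≤ finrank ℂ L := by
  obtain ⟨W, hWL, hW, hWdim⟩ := exists_posOn_finrank_eq_posSquares H L
  obtain ⟨V, hVL, hV, hVdim⟩ := exists_posOn_finrank_eq_posSquares (-H) L
  rw [negSquares_eq_posSquares_neg, ← hWdim, ← hVdim]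
  refine finrank_add_finrank_le_of_posOn_of_nonposOn hWL hVL hW fun x hx => ?_
  have := hV.nonneg hx
  rw [Jform_neg, Complex.neg_re] at this
  linarith

lemma Jform.PosOn.nonposOn_inf_orth (hH : H.IsHermitian) (hW : PosOn H W) (hWL : W ≤ L)
    (hmax : finrank ℂ W = posSquares H L) : NonposOn H (L ⊓ orth H W) := by
  rintro x ⟨hxL, hxW⟩
  by_contra! hxx
  have hxW' : ℂ ∙ x ≤ orth H W := (Submodule.span_singleton_le_iff_mem _ _).mpr hxW
  have hle := finrank_le_posSquares
    (sup_le hWL ((Submodule.span_singleton_le_iff_mem _ _).mpr hxL))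
    (hW.sup hH (posOn_span_singleton hxx) hxW')
  have hsup : W = W ⊔ ℂ ∙ x := Submodule.eq_of_le_of_finrank_le le_sup_left (hmax ▸ hle)
  have hxx' : Jform H x x = 0 :=
    hxW x (hsup ▸ Submodule.mem_sup_right (Submodule.mem_span_singleton_self x))
  simp [hxx'] at hxx

lemma exists_nonposOn_finrank_le (hH : H.IsHermitian) (L : Submodule ℂ (Fin N → ℂ)) :
    ∃ V ≤ L, NonposOn H V ∧ finrank ℂ L ≤ finrank ℂ V + posSquares H L := by
  obtain ⟨W, hWL, hW, hWdim⟩ := exists_posOn_finrank_eq_posSquares H L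
  exact ⟨_, inf_le_left, hW.nonposOn_inf_orth hH hWL hWdim,
    hWdim ▸ finrank_le_finrank_inf_orth_add H W L⟩

lemma posSquares_add_negSquares_of_disjoint_orth (hH : H.IsHermitian)
    (hL : Disjoint L (orth H L)) : posSquares H L + negSquares H L = finrank ℂ L := by
  refine le_antisymm posSquares_add_negSquares_le ?_
  obtain ⟨W, hWL, hW, hWdim⟩ := exists_posOn_finrank_eq_posSquares H L
  have hV : NonposOn H (L ⊓ orth H W) := hW.nonposOn_inf_orth hH hWL hWdim
  have hdim := finrank_le_finrank_inf_orth_add H W L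
  have hWV : W ⊔ L ⊓ orth H W = L := by
    refine Submodule.eq_of_le_of_finrank_le (sup_le hWL inf_le_left) ?_
    have := Submodule.finrank_sup_add_finrank_inf_eq W (L ⊓ orth H W)
    rw [(hW.disjoint hV).eq_bot, finrank_bot] at this
    omega
  -- an isotropic vector of `L ⊓ orth H W` would be orthogonal to `W ⊔ L ⊓ orth H W = L`
  have hVneg : PosOn (-H) (L ⊓ orth H W) := by
    intro x hx hx0
    rw [Jform_neg, Complex.neg_re, neg_pos]
    refine (hV x hx).lt_of_ne fun hxx => hx0 ?_
    refine Submodule.disjoint_def.mp hL x hx.1 ?_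
    rw [← hWV, orth_sup]
    exact ⟨hx.2, hV.mem_orth hH hx hxx⟩
  have := finrank_le_posSquares inf_le_left hVneg
  rw [negSquares_eq_posSquares_neg]
  omega

lemma posSquares_add_le (hH : H.IsHermitian) (hK : K.IsHermitian) :
    posSquares (H + K) L ≤ posSquares H L + posSquares K L := by
  obtain ⟨W, hWL, hW, hWdim⟩ := exists_posOn_finrank_eq_posSquares (H + K) L
  obtain ⟨V₁, hV₁L, hV₁, hV₁dim⟩ := exists_nonposOn_finrank_le hH L
  obtain ⟨V₂, hV₂L, hV₂, hV₂dim⟩ := exists_nonposOn_finrank_le hK L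
  have h₁ := finrank_add_finrank_le_of_posOn_of_nonposOn hWL (inf_le_left.trans hV₁L) hW
    (hV₁.inf_add hV₂)
  have h₂ := Submodule.finrank_sup_add_finrank_inf_eq V₁ V₂
  have h₃ := Submodule.finrank_mono (sup_le hV₁L hV₂L)
  omega

lemma posSquares_add_negSquares_add_finrank_ker_le (hH : H.IsHermitian) :
    posSquares H L + negSquares H L + finrank ℂ ↥(L ⊓ LinearMap.ker (toLin' H))
      ≤ finrank ℂ L := by
  have hR : ∀ x, ∀ r ∈ L ⊓ LinearMap.ker (toLin' H), Jform H r x = 0 ∧ Jform H x r = 0 :=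
    fun x r hr => by
      have hr0 : H *ᵥ r = 0 := by simpa using hr.2
      exact ⟨by simp [Jform, hr0], by rw [Jform_eq_star_dotProduct hH, hr0, dotProduct_zero]⟩
  have hRL : L ⊓ LinearMap.ker (toLin' H) ≤ L := inf_le_left
  generalize L ⊓ LinearMap.ker (toLin' H) = R at hR hRL ⊢
  obtain ⟨W, hWL, hW, hWdim⟩ := exists_posOn_finrank_eq_posSquares H L
  obtain ⟨V, hVL, hV, hVdim⟩ := exists_posOn_finrank_eq_posSquares (-H) L
  have hWR : finrank ℂ ↥(W ⊔ R) = finrank ℂ W + finrank ℂ R := by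
    have := Submodule.finrank_sup_add_finrank_inf_eq W R
    rwa [(hW.disjoint fun r hr => by simp [(hR r r hr).1]).eq_bot, finrank_bot, add_zero] at this
  have hWRneg : NonposOn (-H) (W ⊔ R) := by
    intro x hx
    obtain ⟨w, hw, r, hr, rfl⟩ := Submodule.mem_sup.mp hx
    have := hW.nonneg hw
    simp [Jform_neg, (hR w r hr).1, (hR w r hr).2, (hR r r hr).1]
    linarith
  have := finrank_add_finrank_le_of_posOn_of_nonposOn hVL (sup_le hWL hRL) hV hWRneg
  rw [negSquares_eq_posSquares_neg, ← hWdim, ← hVdim]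
  omega

end Squares

section Orthogonal

open Jform

variable {N : ℕ} {H : Matrix (Fin N) (Fin N) ℂ} {U V : Submodule ℂ (Fin N → ℂ)}

lemma posSquares_add_posSquares_le_sup (hH : H.IsHermitian) (hUV : V ≤ orth H U) :
    posSquares H U + posSquares H V ≤ posSquares H (U ⊔ V) := by
  obtain ⟨W₁, hW₁U, hW₁, hW₁dim⟩ := exists_posOn_finrank_eq_posSquares H U
  obtain ⟨W₂, hW₂V, hW₂, hW₂dim⟩ := exists_posOn_finrank_eq_posSquares H V
  have h₂₁ : W₂ ≤ orth H W₁ := hW₂V.trans (hUV.trans (orth_anti hW₁U))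
  have hdim := Submodule.finrank_sup_add_finrank_inf_eq W₁ W₂
  rw [(hW₁.disjoint_orth.mono_right h₂₁).eq_bot, finrank_bot] at hdim
  have := finrank_le_posSquares (sup_le_sup hW₁U hW₂V) (hW₁.sup hH hW₂ h₂₁)
  omega

lemma disjoint_orth_sup (hH : H.IsHermitian) (hUV : V ≤ orth H U)
    (hU : Disjoint U (orth H U)) (hV : Disjoint V (orth H V)) :
    Disjoint (U ⊔ V) (orth H (U ⊔ V)) := by
  rw [orth_sup, Submodule.disjoint_def]
  rintro _ hx ⟨hxU, hxV⟩
  obtain ⟨u, hu, v, hv, rfl⟩ := Submodule.mem_sup.mp hx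
  have hu0 : u = 0 := Submodule.disjoint_def.mp hU u hu (by simpa using sub_mem hxU (hUV hv))
  have hv0 : v = 0 := Submodule.disjoint_def.mp hV v hv
    (by simpa using sub_mem hxV ((le_orth_comm hH).mp hUV hu))
  simp [hu0, hv0]

lemma posSquares_sup (hH : H.IsHermitian) (hUV : V ≤ orth H U)
    (hU : Disjoint U (orth H U)) (hV : Disjoint V (orth H V)) :
    posSquares H (U ⊔ V) = posSquares H U + posSquares H V := by
  have h₁ := posSquares_add_posSquares_le_sup hH hUV
  have h₂ := posSquares_add_posSquares_le_sup hH.neg (orth_neg (H := H) ▸ hUV)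
  have h₃ := posSquares_add_negSquares_le (H := H) (L := U ⊔ V)
  have hU' := posSquares_add_negSquares_of_disjoint_orth hH hU
  have hV' := posSquares_add_negSquares_of_disjoint_orth hH hV
  have := Submodule.finrank_add_le_finrank_add_finrank U V
  simp only [negSquares_eq_posSquares_neg] at *
  omega

variable {ι : Type*} {W : ι → Submodule ℂ (Fin N → ℂ)}

lemma disjoint_orth_biSup (hH : H.IsHermitian) (T : Finset ι)
    (horth : (T : Set ι).Pairwise fun i j => W j ≤ orth H (W i))
    (hW : ∀ i ∈ T, Disjoint (W i) (orth H (W i))) :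
    Disjoint (⨆ i ∈ T, W i) (orth H (⨆ i ∈ T, W i)) := by
  classical
  induction T using Finset.induction_on with
  | empty => simp
  | insert j T hj ih =>
    rw [Finset.iSup_insert]
    refine disjoint_orth_sup hH ?_ (hW j (T.mem_insert_self j))
      (ih (horth.mono (by simp)) fun i hi => hW i (Finset.mem_insert_of_mem hi))
    exact iSup₂_le fun i hi => horth (by simp) (by simp [hi]) (by rintro rfl; exact hj hi)

lemma posSquares_biSup (hH : H.IsHermitian) (T : Finset ι)
    (horth : (T : Set ι).Pairwise fun i j => W j ≤ orth H (W i))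
    (hW : ∀ i ∈ T, Disjoint (W i) (orth H (W i))) :
    posSquares H (⨆ i ∈ T, W i) = ∑ i ∈ T, posSquares H (W i) := by
  classical
  induction T using Finset.induction_on with
  | empty => simpa using le_of_add_le_left (posSquares_add_negSquares_le (H := H) (L := ⊥))
  | insert j T hj ih =>
    have horth' : (T : Set ι).Pairwise fun i j => W j ≤ orth H (W i) := horth.mono (by simp)
    have hW' : ∀ i ∈ T, Disjoint (W i) (orth H (W i)) := fun i hi =>
      hW i (Finset.mem_insert_of_mem hi)
    rw [Finset.iSup_insert, Finset.sum_insert hj, ← ih horth' hW']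
    refine posSquares_sup hH ?_ (hW j (T.mem_insert_self j)) (disjoint_orth_biSup hH T horth' hW')
    exact iSup₂_le fun i hi => horth (by simp) (by simp [hi]) (by rintro rfl; exact hj hi)

lemma sig_biSup (hH : H.IsHermitian) (T : Finset ι)
    (horth : (T : Set ι).Pairwise fun i j => W j ≤ orth H (W i))
    (hW : ∀ i ∈ T, Disjoint (W i) (orth H (W i))) :
    sig H (⨆ i ∈ T, W i) = ∑ i ∈ T, sig H (W i) := by
  simp only [sig, negSquares_eq_posSquares_neg]
  rw [posSquares_biSup hH T horth hW, posSquares_biSup hH.neg T (by simpa [orth_neg] using horth)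
    (by simpa [orth_neg] using hW)]
  push_cast
  rw [Finset.sum_sub_distrib]

end Orthogonal

section Eigen

open Jform Module.End

variable {N : ℕ} {J A : Matrix (Fin N) (Fin N) ℂ} {x y : Fin N → ℂ}

noncomputable def realSpectrum (A : Matrix (Fin N) (Fin N) ℂ) : Finset ℝ :=
  A.finite_real_spectrum.toFinset

lemma mem_realSpectrum {μ : ℝ} : μ ∈ realSpectrum A ↔ (μ : ℂ) ∈ spectrum ℂ A := by
  rw [realSpectrum, Set.Finite.mem_toFinset, ← spectrum.algebraMap_mem_iff ℂ]
  rfl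

lemma eigenspace_eq_bot_of_notMem {μ : ℝ} (hμ : μ ∉ realSpectrum A) :
    eigenspace (toLin' A) μ = ⊥ := by
  by_contra h
  exact hμ (mem_realSpectrum.mpr (spectrum_toLin' A ▸ (hasEigenvalue_iff.mpr h).mem_spectrum))

lemma Diagonalizable.iSup_eigenspace_eq_top (hd : Diagonalizable A) :
    ⨆ z : ℂ, eigenspace (toLin' A) z = ⊤ := by
  obtain ⟨P, D, hP, hD, rfl⟩ := hd
  have hcol : ∀ i, P *ᵥ Pi.single i 1 ∈ eigenspace (toLin' (P * D * P⁻¹)) (D i i) := fun i => by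
    have hDi : D *ᵥ Pi.single i 1 = D i i • Pi.single i 1 := by
      ext k
      rcases eq_or_ne k i with rfl | hk
      · simp
      · simp [hk, hD hk]
    rw [mem_eigenspace_iff, toLin'_apply, mulVec_mulVec, Matrix.mul_assoc, Matrix.mul_assoc,
      nonsing_inv_mul _ hP, Matrix.mul_one, ← mulVec_mulVec, hDi, mulVec_smul]
  rw [eq_top_iff]
  rintro x -
  have hx : x = ∑ i, (P⁻¹ *ᵥ x) i • P *ᵥ Pi.single i 1 := by
    conv_lhs => rw [← one_mulVec x, ← mul_nonsing_inv _ hP, ← mulVec_mulVec,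
      pi_eq_sum_univ' (P⁻¹ *ᵥ x)]
    simp [mulVec_sum, mulVec_smul]
  rw [hx]
  exact Submodule.sum_mem _ fun i _ => Submodule.smul_mem _ _ (Submodule.mem_iSup_of_mem _ (hcol i))

lemma Diagonalizable.biSup_eigenspace_eq_top (hd : Diagonalizable A)
    (hr : spectrum ℂ A ⊆ Set.range Complex.ofReal) :
    ⨆ μ ∈ realSpectrum A, eigenspace (toLin' A) (μ : ℂ) = ⊤ := by
  rw [eq_top_iff, ← hd.iSup_eigenspace_eq_top]
  refine iSup_le fun z => ?_
  by_cases hz : eigenspace (toLin' A) z = ⊥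
  · simp [hz]
  have hzA : z ∈ spectrum ℂ A := spectrum_toLin' A ▸ (hasEigenvalue_iff.mpr hz).mem_spectrum
  obtain ⟨μ, rfl⟩ := hr hzA
  exact le_iSup₂_of_le μ (mem_realSpectrum.mpr hzA) le_rfl

lemma eigSpan_eq_biSup (A : Matrix (Fin N) (Fin N) ℂ) (Δ : Set ℝ) [DecidablePred (· ∈ Δ)] :
    eigSpan A Δ = ⨆ μ ∈ (realSpectrum A).filter (· ∈ Δ), eigenspace (toLin' A) (μ : ℂ) := by
  refine le_antisymm (iSup₂_le fun μ hμ => ?_)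
    (iSup₂_le fun μ hμ => le_iSup₂_of_le μ (Finset.mem_filter.mp hμ).2 le_rfl)
  by_cases hs : μ ∈ realSpectrum A
  · exact le_iSup₂_of_le μ (Finset.mem_filter.mpr ⟨hs, hμ⟩) le_rfl
  · simp [eigenspace_eq_bot_of_notMem hs]

lemma Jform_mulVec_left (hA : J * A = Aᴴ * J) : Jform J (A *ᵥ x) y = Jform J x (A *ᵥ y) := by
  rw [← Jform_mul, hA, Jform, ← mulVec_mulVec, star_mulVec, conjTranspose_conjTranspose,
    ← dotProduct_mulVec, Jform]

lemma Jform_mulVec_of_mem_eigenspace {μ : ℝ} (hx : x ∈ eigenspace (toLin' A) (μ : ℂ)) :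
    Jform J (A *ᵥ x) y = μ * Jform J x y := by
  rw [mem_eigenspace_iff, toLin'_apply] at hx
  rw [hx, Jform_smul_left, Complex.star_def, Complex.conj_ofReal]

lemma eigenspace_le_orth (hA : J * A = Aᴴ * J) {μ ν : ℝ} (hμν : μ ≠ ν) :
    eigenspace (toLin' A) (ν : ℂ) ≤ orth J (eigenspace (toLin' A) (μ : ℂ)) := by
  intro y hy x hx
  have hy' : A *ᵥ y = (ν : ℂ) • y := by rwa [mem_eigenspace_iff, toLin'_apply] at hy
  have h : (μ : ℂ) * Jform J x y = ν * Jform J x y := by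
    rw [← Jform_mulVec_of_mem_eigenspace hx, Jform_mulVec_left hA, hy', Jform_smul_right]
  have hsub : ((μ : ℂ) - ν) * Jform J x y = 0 := by rw [sub_mul, h, sub_self]
  exact (mul_eq_zero.mp hsub).resolve_left (sub_ne_zero.mpr (mod_cast hμν))

open scoped ComplexOrder in
lemma orth_top_eq_bot (hJ : IsUnit J.det) : orth J ⊤ = ⊥ := by
  refine eq_bot_iff.mpr fun y hy => ?_
  have := hy (J⁻¹ *ᵥ y) trivial
  rwa [Jform, mulVec_mulVec, mul_nonsing_inv _ hJ, one_mulVec, dotProduct_star_self_eq_zero] at this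

/-- The eigenspaces are mutually `J`-orthogonal and span everything, so the nondegeneracy of `J`
passes to each of them. -/
lemma disjoint_eigenspace_orth (hJinv : IsUnit J.det) (hJ : J.IsHermitian)
    (hA : J * A = Aᴴ * J) (hd : Diagonalizable A) (hr : spectrum ℂ A ⊆ Set.range Complex.ofReal)
    (μ : ℝ) :
    Disjoint (eigenspace (toLin' A) (μ : ℂ)) (orth J (eigenspace (toLin' A) (μ : ℂ))) := by
  refine Submodule.disjoint_def.mpr fun x hx hxo => ?_
  have hspan : ∀ ν ∈ realSpectrum A, eigenspace (toLin' A) (ν : ℂ) ≤ orth J (ℂ ∙ x) := by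
    intro ν _
    rw [le_orth_comm hJ, Submodule.span_singleton_le_iff_mem]
    rcases eq_or_ne ν μ with rfl | hνμ
    · exact hxo
    · exact eigenspace_le_orth hA hνμ hx
  have htop := (hd.biSup_eigenspace_eq_top hr).symm.le.trans (iSup₂_le hspan)
  rwa [← le_orth_comm hJ, orth_top_eq_bot hJinv, le_bot_iff, Submodule.span_singleton_eq_bot]
    at htop

end Eigen

section Pencil

open Jform Module.End

variable {N : ℕ} {J A : Matrix (Fin N) (Fin N) ℂ} {x y : Fin N → ℂ} {l μ : ℝ}

lemma isHermitian_mul (hJ : J.IsHermitian) (hA : J * A = Aᴴ * J) : (J * A).IsHermitian := by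
  rw [IsHermitian, conjTranspose_mul, hJ.eq, hA]

lemma isHermitian_pencil (hJ : J.IsHermitian) (hA : J * A = Aᴴ * J) (l : ℝ) :
    ((l : ℂ) • J - J * A).IsHermitian :=
  (hJ.smul (by simp [IsSelfAdjoint, Complex.conj_ofReal])).sub (isHermitian_mul hJ hA)

lemma Jform_pencil_of_mem_eigenspace (hx : x ∈ eigenspace (toLin' A) (μ : ℂ)) :
    Jform ((l : ℂ) • J - J * A) x y = (l - μ) * Jform J x y := by
  rw [Jform_sub, Jform_smul, Jform_mul, Jform_mulVec_of_mem_eigenspace hx, Complex.star_def,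
    Complex.conj_ofReal]
  ring

lemma orth_pencil_of_le_eigenspace {W : Submodule ℂ (Fin N → ℂ)}
    (hW : W ≤ eigenspace (toLin' A) (μ : ℂ)) (hl : l ≠ μ) :
    orth ((l : ℂ) • J - J * A) W = orth J W := by
  ext y
  refine forall₂_congr fun x hx => ?_
  rw [Jform_pencil_of_mem_eigenspace (hW hx), mul_eq_zero,
    or_iff_right (by exact_mod_cast sub_ne_zero.mpr hl)]

lemma posSquares_pencil_eigenspace (hl : l ≠ μ) :
    posSquares ((l : ℂ) • J - J * A) (eigenspace (toLin' A) (μ : ℂ)) =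
      if l < μ then negSquares J (eigenspace (toLin' A) (μ : ℂ))
      else posSquares J (eigenspace (toLin' A) (μ : ℂ)) := by
  split_ifs with h
  · rw [negSquares_eq_posSquares_neg]
    refine posSquares_congr fun x hx => ?_
    rw [Jform_pencil_of_mem_eigenspace hx, Jform_neg, Complex.neg_re, ← Complex.ofReal_sub,
      Complex.re_ofReal_mul]
    constructor <;> intro <;> nlinarith
  · refine posSquares_congr fun x hx => ?_
    have : μ < l := lt_of_le_of_ne (not_lt.mp h) hl.symm
    rw [Jform_pencil_of_mem_eigenspace hx, ← Complex.ofReal_sub, Complex.re_ofReal_mul]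
    constructor <;> intro <;> nlinarith

lemma posSquares_pencil (hJinv : IsUnit J.det) (hJ : J.IsHermitian) (hA : J * A = Aᴴ * J)
    (hd : Diagonalizable A) (hr : spectrum ℂ A ⊆ Set.range Complex.ofReal)
    (hl : l ∉ realSpectrum A) :
    posSquares ((l : ℂ) • J - J * A) ⊤ = ∑ μ ∈ realSpectrum A,
      if l < μ then negSquares J (eigenspace (toLin' A) (μ : ℂ))
      else posSquares J (eigenspace (toLin' A) (μ : ℂ)) := by
  have hne : ∀ μ ∈ realSpectrum A, l ≠ μ := fun μ hμ h => hl (h ▸ hμ)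
  rw [← hd.biSup_eigenspace_eq_top hr, posSquares_biSup (isHermitian_pencil hJ hA l)]
  · exact Finset.sum_congr rfl fun μ hμ => posSquares_pencil_eigenspace (hne μ hμ)
  · intro μ hμ ν _ hμν
    rw [orth_pencil_of_le_eigenspace le_rfl (hne μ hμ)]
    exact eigenspace_le_orth hA hμν
  · intro μ hμ
    rw [orth_pencil_of_le_eigenspace le_rfl (hne μ hμ)]
    exact disjoint_eigenspace_orth hJinv hJ hA hd hr μ

lemma sig_eigSpan (hJinv : IsUnit J.det) (hJ : J.IsHermitian) (hA : J * A = Aᴴ * J)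
    (hd : Diagonalizable A) (hr : spectrum ℂ A ⊆ Set.range Complex.ofReal)
    (Δ : Set ℝ) [DecidablePred (· ∈ Δ)] :
    sig J (eigSpan A Δ) =
      ∑ μ ∈ (realSpectrum A).filter (· ∈ Δ), sig J (eigenspace (toLin' A) (μ : ℂ)) := by
  rw [eigSpan_eq_biSup, sig_biSup hJ _ (fun μ _ ν _ h => eigenspace_le_orth hA h)
    fun μ _ => disjoint_eigenspace_orth hJinv hJ hA hd hr μ]

lemma sig_eigSpan_eq_sub (hJinv : IsUnit J.det) (hJ : J.IsHermitian) (hA : J * A = Aᴴ * J)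
    (hd : Diagonalizable A) (hr : spectrum ℂ A ⊆ Set.range Complex.ofReal)
    {Δ : Set ℝ} {a b : ℝ} (hab : a ≤ b) (ha : a ∉ realSpectrum A) (hb : b ∉ realSpectrum A)
    (hΔ : ∀ μ ∈ realSpectrum A, μ ∈ Δ ↔ a < μ ∧ μ < b) :
    sig J (eigSpan A Δ) =
      posSquares ((b : ℂ) • J - J * A) ⊤ - posSquares ((a : ℂ) • J - J * A) ⊤ := by
  classical
  rw [sig_eigSpan hJinv hJ hA hd hr, posSquares_pencil hJinv hJ hA hd hr hb,
    posSquares_pencil hJinv hJ hA hd hr ha, Finset.sum_filter]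
  push_cast
  rw [← Finset.sum_sub_distrib]
  refine Finset.sum_congr rfl fun μ hμ => ?_
  have hbμ : b ≠ μ := fun h => hb (h ▸ hμ)
  rw [hΔ μ hμ, sig]
  rcases lt_or_gt_of_ne hbμ with hbμ | hμb
  · simp [hbμ, hab.trans_lt hbμ, hbμ.not_gt]
  · by_cases haμ : a < μ <;> simp [hμb, haμ, hμb.not_gt]

end Pencil

section Endpoints

variable {Δ : Set ℝ} {m : ℝ}

lemma IsOpen.exists_notMem_finset_lt_and_gt (hΔ : IsOpen Δ) (hm : m ∈ Δ) (T : Finset ℝ) :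
    (∃ a ∈ Δ, a < m ∧ a ∉ T) ∧ ∃ b ∈ Δ, m < b ∧ b ∉ T := by
  obtain ⟨l, u, ⟨hlm, hmu⟩, hΔlu⟩ := mem_nhds_iff_exists_Ioo_subset.mp (hΔ.mem_nhds hm)
  obtain ⟨a, ha, haT⟩ := (Set.Ioo_infinite hlm).exists_notMem_finset T
  obtain ⟨b, hb, hbT⟩ := (Set.Ioo_infinite hmu).exists_notMem_finset T
  exact ⟨⟨a, hΔlu ⟨ha.1, ha.2.trans hmu⟩, ha.2, haT⟩, ⟨b, hΔlu ⟨hlm.trans hb.1, hb.2⟩, hb.1, hbT⟩⟩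

lemma exists_notMem_finset_mem_iff_of_isOpen (hΔ : IsOpen Δ) (hΔc : Δ.OrdConnected)
    (T : Finset ℝ) :
    ∃ a b, a ≤ b ∧ a ∉ T ∧ b ∉ T ∧ ∀ μ ∈ T, μ ∈ Δ ↔ a < μ ∧ μ < b := by
  classical
  rcases (T.filter (· ∈ Δ)).eq_empty_or_nonempty with hS | hS
  · obtain ⟨c, hc⟩ := Infinite.exists_notMem_finset T
    refine ⟨c, c, le_rfl, hc, hc, fun μ hμ => ?_⟩
    have hμΔ : μ ∉ Δ := fun h => by simpa [hS] using Finset.mem_filter.mpr ⟨hμ, h⟩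
    simp only [hμΔ, false_iff, not_and, not_lt]
    exact le_of_lt
  · obtain ⟨a, haΔ, ha, haT⟩ :=
      (hΔ.exists_notMem_finset_lt_and_gt (Finset.mem_filter.mp (Finset.min'_mem _ hS)).2 T).1
    obtain ⟨b, hbΔ, hb, hbT⟩ :=
      (hΔ.exists_notMem_finset_lt_and_gt (Finset.mem_filter.mp (Finset.max'_mem _ hS)).2 T).2
    refine ⟨a, b, ((ha.trans_le (Finset.min'_le_max' _ hS)).trans hb).le, haT, hbT,
      fun μ hμ => ⟨fun h => ?_, fun h => hΔc.out haΔ hbΔ ⟨h.1.le, h.2.le⟩⟩⟩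
    have hμS : μ ∈ T.filter (· ∈ Δ) := Finset.mem_filter.mpr ⟨hμ, h⟩
    exact ⟨ha.trans_le (Finset.min'_le _ μ hμS), (Finset.le_max' _ μ hμS).trans_lt hb⟩

end Endpoints

section Perturbation

open Module

variable {N : ℕ} {J A₁ A₂ : Matrix (Fin N) (Fin N) ℂ}

lemma isHermitian_mul_sub (hJ : J.IsHermitian) (hA₁ : J * A₁ = A₁ᴴ * J)
    (hA₂ : J * A₂ = A₂ᴴ * J) : (J * (A₁ - A₂)).IsHermitian :=
  isHermitian_mul hJ (by rw [Matrix.mul_sub, hA₁, hA₂, conjTranspose_sub, Matrix.sub_mul])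

lemma posSquares_pencil_le_add (hJ : J.IsHermitian) (hA₁ : J * A₁ = A₁ᴴ * J)
    (hA₂ : J * A₂ = A₂ᴴ * J) (l : ℝ) :
    posSquares ((l : ℂ) • J - J * A₂) ⊤ ≤
      posSquares ((l : ℂ) • J - J * A₁) ⊤ + posSquares (J * (A₁ - A₂)) ⊤ := by
  convert posSquares_add_le (isHermitian_pencil hJ hA₁ l) (isHermitian_mul_sub hJ hA₁ hA₂) using 2
  rw [Matrix.mul_sub, sub_add_sub_cancel]

lemma posSquares_mul_sub_add_posSquares_mul_sub_le (hJinv : IsUnit J.det) (hJ : J.IsHermitian)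
    (hA₁ : J * A₁ = A₁ᴴ * J) (hA₂ : J * A₂ = A₂ᴴ * J) :
    posSquares (J * (A₁ - A₂)) ⊤ + posSquares (J * (A₂ - A₁)) ⊤ ≤
      N - finrank ℂ (LinearMap.ker (toLin' (A₁ - A₂))) := by
  have h := posSquares_add_negSquares_add_finrank_ker_le (L := ⊤) (isHermitian_mul_sub hJ hA₁ hA₂)
  have hker : LinearMap.ker (toLin' (J * (A₁ - A₂))) = LinearMap.ker (toLin' (A₁ - A₂)) := by
    rw [toLin'_mul, LinearMap.ker_comp_of_ker_eq_bot]
    exact LinearMap.ker_eq_bot.mpr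
      (mulVec_injective_iff_isUnit.mpr ((isUnit_iff_isUnit_det J).mpr hJinv))
  rw [negSquares_eq_posSquares_neg, ← Matrix.mul_neg, neg_sub, top_inf_eq, hker, finrank_top,
    finrank_fin_fun] at h
  omega

end Perturbation

theorem stmt10 {N : ℕ} (J A₁ A₂ : Matrix (Fin N) (Fin N) ℂ)
    (hJinv : IsUnit J.det) (hJ : J.IsHermitian)
    (hA₁ : J * A₁ = A₁ᴴ * J) (hA₂ : J * A₂ = A₂ᴴ * J)
    (hd₁ : Diagonalizable A₁) (hd₂ : Diagonalizable A₂)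
    (hr₁ : spectrum ℂ A₁ ⊆ Set.range (Complex.ofReal))
    (hr₂ : spectrum ℂ A₂ ⊆ Set.range (Complex.ofReal))
    (n : ℕ)
    (hn : N - Module.finrank ℂ (LinearMap.ker (Matrix.toLin' (A₁ - A₂))) = n)
    (Δ : Set ℝ) (hΔopen : IsOpen Δ) (hΔconn : Δ.OrdConnected) :
    |sig J (eigSpan A₂ Δ) - sig J (eigSpan A₁ Δ)| ≤ n := by
  obtain ⟨a, b, hab, ha, hb, hΔab⟩ :=
    exists_notMem_finset_mem_iff_of_isOpen hΔopen hΔconn (realSpectrum A₁ ∪ realSpectrum A₂)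
  simp only [Finset.mem_union, not_or] at ha hb hΔab
  rw [sig_eigSpan_eq_sub hJinv hJ hA₁ hd₁ hr₁ hab ha.1 hb.1 fun μ hμ => hΔab μ (.inl hμ),
    sig_eigSpan_eq_sub hJinv hJ hA₂ hd₂ hr₂ hab ha.2 hb.2 fun μ hμ => hΔab μ (.inr hμ)]
  have hR := posSquares_mul_sub_add_posSquares_mul_sub_le hJinv hJ hA₁ hA₂
  have h₂₁a := posSquares_pencil_le_add hJ hA₁ hA₂ a
  have h₂₁b := posSquares_pencil_le_add hJ hA₁ hA₂ b
  have h₁₂a := posSquares_pencil_le_add hJ hA₂ hA₁ a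
  have h₁₂b := posSquares_pencil_le_add hJ hA₂ hA₁ b
  rw [abs_le]
  constructor <;> omega
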